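/- arXiv:2107.06309 — 2 statements merged into one kernel-verified Lean document; each statement's English description precedes it below -/
import Mathlib

section
/- Let 1 ≤ ℓ ≤ d be integers, let T(x) = Σ_{j=0}^d c_j x^j be a real polynomial of degree d, and define g : {±1}^n → ℝ by g(x) = T((x_1 + ⋯ + x_n)/n). Then the degree-ℓ homogeneous part g_ℓ of g satisfies |g_ℓ(1^n)| ≥ |c_ℓ| − (2·(d+1)!·max_{ℓ ≤ j ≤ d} |c_j|)/n, where 1^n is the all-ones input. -/
/-- The sign ±1 corresponding to a boolean: `true ↦ 1`, `false ↦ -1`. -/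
noncomputable def sgn (b : Bool) : ℝ := if b then 1 else -1

/-- The character (monomial) `χ_S(x) = ∏_{j ∈ S} x_j` on the cube `{±1}^n`. -/
noncomputable def chi {n : ℕ} (S : Finset (Fin n)) (x : Fin n → Bool) : ℝ :=
  ∏ i ∈ S, sgn (x i)

/-- The Fourier coefficient `f̂(S) = E[f(X) χ_S(X)]` for `X` uniform on `{±1}^n`. -/
noncomputable def fcoeff {n : ℕ} (f : (Fin n → Bool) → ℝ) (S : Finset (Fin n)) : ℝ :=
  (∑ x : Fin n → Bool, f x * chi S x) / 2 ^ n

/-- The degree-`ℓ` homogeneous part `f_ℓ(x) = ∑_{|S| = ℓ} f̂(S) χ_S(x)`. -/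
noncomputable def homPart {n : ℕ} (f : (Fin n → Bool) → ℝ) (ℓ : ℕ) (x : Fin n → Bool) : ℝ :=
  ∑ S ∈ Finset.univ.filter (fun S : Finset (Fin n) => S.card = ℓ), fcoeff f S * chi S x

/-- `C(d, ℓ)`: the coefficient of `z^ℓ` in the degree-`d` Chebyshev polynomial `T_d`. -/
noncomputable def chebCoeff (d ℓ : ℕ) : ℝ := (Polynomial.Chebyshev.T ℝ (d : ℤ)).coeff ℓ

/-! Expanding `(x_1 + ⋯ + x_n) ^ j` over maps `p : [j] → [n]` writes it as `∑_p χ_{O(p)}`, where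
`O(p)` is the set of points whose fibre under `p` has odd size. Hence the `j`-th term of `g`
contributes `c_j / n ^ j` times the number of `p` with `|O(p)| = ℓ` to `g_ℓ(1^n)`. There are no
such `p` for `j < ℓ`; for `j = ℓ` they are exactly the injective maps, `n ^ ℓ (1 - O(ℓ² / n))` of
them; for `j > ℓ` they are not injective, so there are at most
`n ^ j - n (n - 1) ⋯ (n - j + 1) ≤ (j choose 2) n ^ (j - 1)` of them. Summing the resulting
errors over `ℓ ≤ j ≤ d` costs at most `max |c_j| · ∑_{j ≤ d} (j choose 2) / n ≤ max |c_j| (d + 1)! / n`. -/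

open Finset
open scoped Nat

lemma sgn_mul_self (b : Bool) : sgn b * sgn b = 1 := by
  cases b <;> simp [sgn]

lemma sgn_pow (b : Bool) (m : ℕ) : sgn b ^ m = if Odd m then sgn b else 1 := by
  rcases Nat.even_or_odd' m with ⟨k, rfl | rfl⟩
  · simp [pow_mul, sq, sgn_mul_self]
  · simp [pow_succ, pow_mul, sgn_mul_self]

section CubeFourier

variable {n : ℕ}

lemma chi_true (S : Finset (Fin n)) : chi S (fun _ => true) = 1 :=
  prod_eq_one fun _ _ => if_pos rfl

lemma sum_chi_mul_chi (S T : Finset (Fin n)) :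
    ∑ x : Fin n → Bool, chi S x * chi T x = if S = T then 2 ^ n else 0 := by
  have hfactor (x : Fin n → Bool) : chi S x * chi T x =
      ∏ i, (if i ∈ S then sgn (x i) else 1) * (if i ∈ T then sgn (x i) else 1) := by
    simp only [chi, prod_mul_distrib, prod_ite_mem, univ_inter]
  have hsum (i : Fin n) :
      ∑ b : Bool, (if i ∈ S then sgn b else 1) * (if i ∈ T then sgn b else 1) =
        if (i ∈ S ↔ i ∈ T) then 2 else 0 := by
    by_cases hS : i ∈ S <;> by_cases hT : i ∈ T <;> norm_num [hS, hT, sgn]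
  rw [sum_congr rfl fun x _ => hfactor x, ← Fintype.prod_sum (fun i (b : Bool) =>
    (if i ∈ S then sgn b else 1) * (if i ∈ T then sgn b else 1)), prod_congr rfl fun i _ => hsum i]
  split_ifs with hST
  · simp [hST]
  · obtain ⟨i, hi⟩ : ∃ i, ¬(i ∈ S ↔ i ∈ T) := by
      by_contra! h
      exact hST (Finset.ext h)
    exact prod_eq_zero (mem_univ i) (by simp only [if_neg hi])

lemma fcoeff_chi (S T : Finset (Fin n)) : fcoeff (chi T) S = if T = S then 1 else 0 := by
  rw [fcoeff, sum_chi_mul_chi]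
  split_ifs <;> simp

lemma homPart_chi (T : Finset (Fin n)) (ℓ : ℕ) (y : Fin n → Bool) :
    homPart (chi T) ℓ y = if #T = ℓ then chi T y else 0 := by
  simp [homPart, fcoeff_chi]

lemma homPart_sum {ι : Type*} (s : Finset ι) (f : ι → (Fin n → Bool) → ℝ) (ℓ : ℕ)
    (y : Fin n → Bool) :
    homPart (fun x => ∑ i ∈ s, f i x) ℓ y = ∑ i ∈ s, homPart (f i) ℓ y := by
  simp only [homPart, fcoeff, sum_mul, sum_div]
  rw [sum_comm (γ := ι)]
  refine sum_congr rfl fun S _ => ?_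
  rw [sum_comm (γ := ι)]

lemma homPart_const_mul (a : ℝ) (f : (Fin n → Bool) → ℝ) (ℓ : ℕ) (y : Fin n → Bool) :
    homPart (fun x => a * f x) ℓ y = a * homPart f ℓ y := by
  rw [homPart, homPart, mul_sum]
  refine sum_congr rfl fun S _ => ?_
  simp only [fcoeff, mul_assoc, ← mul_sum]
  ring

end CubeFourier

section OddSet

variable {j n : ℕ}

def oddSet (p : Fin j → Fin n) : Finset (Fin n) :=
  {i | Odd #{k | p k = i}}

lemma prod_sgn_comp_eq_chi_oddSet (p : Fin j → Fin n) (x : Fin n → Bool) :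
    ∏ k, sgn (x (p k)) = chi (oddSet p) x := by
  rw [← prod_fiberwise univ p, chi, oddSet, prod_filter]
  refine prod_congr rfl fun i _ => ?_
  rw [prod_congr rfl fun k hk => by rw [(mem_filter.1 hk).2], prod_const, sgn_pow]

lemma pow_sum_sgn (x : Fin n → Bool) (j : ℕ) :
    (∑ i, sgn (x i)) ^ j = ∑ p : Fin j → Fin n, chi (oddSet p) x := by
  rw [sum_pow', Fintype.piFinset_univ]
  exact sum_congr rfl fun p _ => prod_sgn_comp_eq_chi_oddSet p x

lemma oddSet_subset_image (p : Fin j → Fin n) : oddSet p ⊆ univ.image p := by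
  intro i hi
  obtain ⟨k, hk⟩ := card_pos.1 (mem_filter.1 hi).2.pos
  exact mem_image.2 ⟨k, mem_univ k, (mem_filter.1 hk).2⟩

lemma card_oddSet_le (p : Fin j → Fin n) : #(oddSet p) ≤ j :=
  (card_le_card (oddSet_subset_image p)).trans (card_image_le.trans_eq (card_fin j))

lemma card_oddSet_eq_iff_injective (p : Fin j → Fin n) :
    #(oddSet p) = j ↔ Function.Injective p := by
  constructor
  · intro h
    have hle := card_le_card (oddSet_subset_image p)
    rw [h] at hle
    have himage : #(univ.image p) = #(univ : Finset (Fin j)) :=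
      le_antisymm card_image_le ((card_fin j).trans_le hle)
    simpa using card_image_iff.1 himage
  · intro hp
    have hfiber (k : Fin j) : ({k' | p k' = p k} : Finset (Fin j)) = {k} := by
      ext k'
      simp [hp.eq_iff]
    have : oddSet p = univ.image p := by
      refine (oddSet_subset_image p).antisymm fun i hi => ?_
      obtain ⟨k, -, rfl⟩ := mem_image.1 hi
      simp [oddSet, hfiber]
    rw [this, card_image_of_injective _ hp, card_fin]

end OddSet

def oddCount (n j ℓ : ℕ) : ℕ :=
  #{p : Fin j → Fin n | #(oddSet p) = ℓ}

lemma card_injective_fin (n j : ℕ) :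
    #{p : Fin j → Fin n | Function.Injective p} = n.descFactorial j := by
  rw [← Fintype.card_subtype, Fintype.card_congr (Equiv.subtypeInjectiveEquivEmbedding _ _),
    Fintype.card_embedding_eq, Fintype.card_fin, Fintype.card_fin]

lemma oddCount_self (n j : ℕ) : oddCount n j j = n.descFactorial j := by
  simp only [oddCount, card_oddSet_eq_iff_injective, card_injective_fin]

lemma oddCount_add_descFactorial_le {n j ℓ : ℕ} (h : ℓ ≠ j) :
    oddCount n j ℓ + n.descFactorial j ≤ n ^ j := by
  rw [oddCount, ← card_injective_fin, ← card_union_of_disjoint]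
  · exact (card_le_univ _).trans_eq (by simp)
  · refine disjoint_filter.2 fun p _ hℓ hp => h ?_
    rw [← hℓ, (card_oddSet_eq_iff_injective p).2 hp]

lemma oddCount_eq_zero_of_lt {n j ℓ : ℕ} (h : j < ℓ) : oddCount n j ℓ = 0 :=
  card_eq_zero.2 (filter_eq_empty_iff.2 fun p _ hp => (card_oddSet_le p).not_gt (hp ▸ h))

lemma abs_oddCount_sub_le (n j ℓ : ℕ) :
    |(oddCount n j ℓ : ℝ) - if j = ℓ then (n : ℝ) ^ j else 0| ≤ n ^ j - n.descFactorial j := by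
  have hD : (n.descFactorial j : ℝ) ≤ n ^ j := by exact_mod_cast Nat.descFactorial_le_pow n j
  split_ifs with h
  · subst h
    rw [oddCount_self, abs_sub_comm, abs_of_nonneg (sub_nonneg.2 hD)]
  · have := oddCount_add_descFactorial_le (n := n) (Ne.symm h)
    rw [sub_zero, abs_of_nonneg (Nat.cast_nonneg _), le_sub_iff_add_le]
    exact_mod_cast this

lemma homPart_pow_sum_sgn_true (n j ℓ : ℕ) :
    homPart (fun x : Fin n → Bool => (∑ i, sgn (x i)) ^ j) ℓ (fun _ => true) = oddCount n j ℓ := by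
  simp only [pow_sum_sgn, homPart_sum, homPart_chi, chi_true, sum_boole, oddCount]

-- `n ^ j - n.descFactorial j ≤ j.choose 2 * n ^ (j - 1)`, multiplied by `n` to avoid truncated
-- subtraction.
lemma pow_succ_le_mul_descFactorial_add (n j : ℕ) :
    n ^ (j + 1) ≤ n * n.descFactorial j + j.choose 2 * n ^ j := by
  induction j with
  | zero => simp
  | succ j ih =>
    have hD := Nat.descFactorial_le_pow n j
    have hn : n ≤ (n - j) + j := by omega
    rw [Nat.descFactorial_succ, Nat.choose_succ_succ, Nat.choose_one_right]
    calc n ^ (j + 2) = n * n ^ (j + 1) := by ring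
      _ ≤ n * (n * n.descFactorial j + j.choose 2 * n ^ j) := Nat.mul_le_mul_left n ih
      _ ≤ n * ((n - j) + j) * n.descFactorial j + j.choose 2 * n ^ (j + 1) := by
        rw [pow_succ]; nlinarith [Nat.mul_le_mul_left n hn]
      _ ≤ n * ((n - j) * n.descFactorial j) + (j + j.choose 2) * n ^ (j + 1) := by
        rw [pow_succ]; nlinarith [Nat.mul_le_mul_left (n * j) hD]

lemma one_sub_descFactorial_div_pow_le {n : ℕ} (hn : 0 < n) (j : ℕ) :
    1 - (n.descFactorial j : ℝ) / n ^ j ≤ j.choose 2 / n := by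
  have h : (n : ℝ) ^ (j + 1) ≤ n * n.descFactorial j + j.choose 2 * n ^ j := by
    exact_mod_cast pow_succ_le_mul_descFactorial_add n j
  have hn' : (0 : ℝ) < n := by exact_mod_cast hn
  rw [sub_le_iff_le_add, div_add_div _ _ (by positivity) (by positivity), le_div_iff₀ (by positivity)]
  linarith [pow_succ (n : ℝ) j]

lemma abs_div_pow_mul_oddCount_sub_le (c : ℝ) {n : ℕ} (hn : 0 < n) (j ℓ : ℕ) :
    |c / n ^ j * oddCount n j ℓ - if j = ℓ then c else 0| ≤ |c| * j.choose 2 / n := by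
  have hpos : (0 : ℝ) < n ^ j := by positivity
  have hfactor : c / n ^ j * oddCount n j ℓ - (if j = ℓ then c else 0) =
      c / n ^ j * (oddCount n j ℓ - if j = ℓ then (n : ℝ) ^ j else 0) := by
    split_ifs
    · field_simp
    · simp
  calc _ = |c| / n ^ j * |(oddCount n j ℓ : ℝ) - if j = ℓ then (n : ℝ) ^ j else 0| := by
        rw [hfactor, abs_mul, abs_div, abs_of_pos hpos]
    _ ≤ |c| / n ^ j * (n ^ j - n.descFactorial j) := by gcongr; exact abs_oddCount_sub_le n j ℓ
    _ = |c| * (1 - (n.descFactorial j : ℝ) / n ^ j) := by field_simp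
    _ ≤ |c| * (j.choose 2 / n) := by gcongr; exact one_sub_descFactorial_div_pow_le hn j
    _ = |c| * j.choose 2 / n := (mul_div_assoc _ _ _).symm

lemma choose_le_factorial (n k : ℕ) : n.choose k ≤ n ! := by
  rcases le_or_gt k n with hkn | hnk
  · rw [← Nat.choose_mul_factorial_mul_factorial hkn, mul_assoc]
    exact Nat.le_mul_of_pos_right _ (by positivity)
  · simp [Nat.choose_eq_zero_of_lt hnk]

lemma sum_range_choose_le_factorial (d k : ℕ) : ∑ j ∈ range (d + 1), j.choose k ≤ (d + 1)! :=
  calc ∑ j ∈ range (d + 1), j.choose k ≤ ∑ _j ∈ range (d + 1), d ! :=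
        sum_le_sum fun j hj =>
          (choose_le_factorial j k).trans (Nat.factorial_le (Nat.lt_succ_iff.1 (mem_range.1 hj)))
    _ = (d + 1)! := by simp [Nat.factorial_succ]

theorem stmt14_general (n d ℓ : ℕ) (hn : 0 < n) (hld : ℓ ≤ d)
    (c : ℕ → ℝ)
    (g : (Fin n → Bool) → ℝ)
    (hg : ∀ x, g x = ∑ j ∈ Finset.range (d + 1), c j * ((∑ i, sgn (x i)) / n) ^ j) :
    |c ℓ| - 2 * (Nat.factorial (d + 1)) *
        ((Finset.Icc ℓ d).sup' (Finset.nonempty_Icc.mpr hld) fun j => |c j|) / n ≤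
      |homPart g ℓ (fun _ => true)| := by
  set M := (Icc ℓ d).sup' (nonempty_Icc.mpr hld) fun j => |c j|
  have hM0 : 0 ≤ M := (abs_nonneg _).trans (le_sup' (fun j => |c j|) (mem_Icc.2 ⟨le_rfl, hld⟩))
  have hgpow : g = fun x => ∑ j ∈ range (d + 1), c j / n ^ j * (∑ i, sgn (x i)) ^ j :=
    funext fun x => by rw [hg]; exact sum_congr rfl fun j _ => by ring
  have hterm (j : ℕ) (hj : j ∈ range (d + 1)) :
      |c j / n ^ j * oddCount n j ℓ - if j = ℓ then c ℓ else 0| ≤ M * j.choose 2 / n := by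
    rcases lt_or_ge j ℓ with hjℓ | hℓj
    · rw [oddCount_eq_zero_of_lt hjℓ, if_neg hjℓ.ne]
      simp only [Nat.cast_zero, mul_zero, sub_zero, abs_zero]
      positivity
    · have hcj : |c j| ≤ M :=
        le_sup' (fun j => |c j|) (mem_Icc.2 ⟨hℓj, Nat.lt_succ_iff.1 (mem_range.1 hj)⟩)
      calc _ = |c j / n ^ j * oddCount n j ℓ - if j = ℓ then c j else 0| := by
            split_ifs with h <;> simp only [h]
        _ ≤ |c j| * j.choose 2 / n := abs_div_pow_mul_oddCount_sub_le (c j) hn j ℓ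
        _ ≤ M * j.choose 2 / n := by gcongr
  have hdiff : |homPart g ℓ (fun _ => true) - c ℓ| ≤ 2 * (d + 1)! * M / n :=
    calc _ = |∑ j ∈ range (d + 1), (c j / n ^ j * oddCount n j ℓ - if j = ℓ then c ℓ else 0)| := by
          rw [hgpow, homPart_sum, sum_sub_distrib, sum_ite_eq',
            if_pos (mem_range.2 (Nat.lt_succ_of_le hld))]
          simp only [homPart_const_mul, homPart_pow_sum_sgn_true]
      _ ≤ ∑ j ∈ range (d + 1), M * j.choose 2 / n :=
          (abs_sum_le_sum_abs _ _).trans (sum_le_sum hterm)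
      _ = M * ((∑ j ∈ range (d + 1), j.choose 2 : ℕ) : ℝ) / n := by
          rw [Nat.cast_sum, mul_sum, sum_div]
      _ ≤ M * (d + 1)! / n := by gcongr; exact_mod_cast sum_range_choose_le_factorial d 2
      _ ≤ 2 * (d + 1)! * M / n := by
          gcongr ?_ / _
          have : (0 : ℝ) ≤ (d + 1)! := by positivity
          nlinarith
  linarith [abs_sub_abs_le_abs_sub (c ℓ) (homPart g ℓ (fun _ => true)),
    abs_sub_comm (c ℓ) (homPart g ℓ (fun _ => true))]

/-- If `T(x) = Σ_{j=0}^d c_j x^j` is a real polynomial of degree `d`, `1 ≤ ℓ ≤ d`, and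
`g(x) = T((x_1 + ⋯ + x_n)/n)` on `{±1}^n`, then
`|g_ℓ(1^n)| ≥ |c_ℓ| − 2·(d+1)!·max_{ℓ ≤ j ≤ d} |c_j| / n`. -/
theorem stmt14 (n d ℓ : ℕ) (hn : 0 < n) (hℓ : 1 ≤ ℓ) (hld : ℓ ≤ d)
    (c : ℕ → ℝ) (hc : c d ≠ 0)
    (g : (Fin n → Bool) → ℝ)
    (hg : ∀ x, g x = ∑ j ∈ Finset.range (d + 1), c j * ((∑ i, sgn (x i)) / n) ^ j) :
    |c ℓ| - 2 * (Nat.factorial (d + 1)) *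
        ((Finset.Icc ℓ d).sup' (Finset.nonempty_Icc.mpr hld) fun j => |c j|) / n ≤
      |homPart g ℓ (fun _ => true)| :=
  stmt14_general n d ℓ hn hld c g hg
end

section
/- Let f : {±1}^n → [-1,1] have degree d ≥ 1. Then Σ_{i=1}^n |f̂({i})| ≤ d; equivalently, the degree-1 homogeneous part satisfies ‖f̂_1‖_1 = ‖f_1‖_∞ ≤ d. -/
/-!
For fixed `z`, the polynomial `t ↦ ∑ₗ f_ℓ(z) tˡ` is the noise operator `T_t f (z)`, an average of
`f` against the kernel `∏ᵢ (1 + t yᵢ zᵢ)`, which is a probability density for `|t| ≤ 1`. So it is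
a polynomial of degree `≤ d`, bounded by `1` on `[-1, 1]`, whose linear coefficient is `f_1(z)`.
Its odd part has degree `≤ 2m + 1 ≤ d`, and for such polynomials `|P'(0)| ≤ 2m + 1` (Bernstein's
inequality at `0`): interpolating at the extremal points `cos (jπ / (2m + 1))` of `T_{2m+1}` writes
`P'(0)` as a combination of the values `P(x_j)` whose weights alternate in sign like
`T_{2m+1}(x_j) = (-1)^j`, so `T_{2m+1}` is extremal and `|T_{2m+1}'(0)| = 2m + 1`.
Choosing `zᵢ = sign f̂({i})` gives `f_1(z) = ‖f̂_1‖_1`.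
-/

open Polynomial Finset Real

namespace Lagrange

variable {F ι : Type*} [Field F] [DecidableEq ι] {s : Finset ι} {v : ι → F}

theorem eval_derivative_eq_sum_eval_mul {P : F[X]} (hvs : Set.InjOn v s) (hP : P.degree < #s)
    (x : F) :
    (derivative P).eval x =
      ∑ i ∈ s, P.eval (v i) * (derivative (Lagrange.basis s v i)).eval x := by
  conv_lhs => rw [eq_interpolate hvs hP, interpolate_apply]
  simp [eval_finsetSum, derivative_mul]

theorem eval_derivative_basis {i : ι} {x : F} (hx : ∀ j ∈ s.erase i, x ≠ v j) :
    (derivative (Lagrange.basis s v i)).eval x =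
      (Lagrange.basis s v i).eval x * ∑ j ∈ s.erase i, (x - v j)⁻¹ := by
  simp only [Lagrange.basis, derivative_prod_finset, eval_finsetSum, eval_mul, eval_prod,
    basisDivisor, derivative_mul, derivative_C, zero_mul, zero_add, derivative_sub,
    derivative_X, derivative_C, sub_zero, mul_one, eval_C, eval_sub, eval_X, mul_sum]
  refine sum_congr rfl fun j hj => ?_
  rw [← mul_prod_erase _ _ hj]
  field_simp [sub_ne_zero.mpr (hx j hj)]

end Lagrange

namespace Polynomial.Chebyshev

theorem node_sub_eq_neg {n i : ℕ} (hn : n ≠ 0) (hi : i ≤ n) : node n (n - i) = -node n i := by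
  rw [node, node, ← cos_pi_sub, Nat.cast_sub hi]
  congr 1
  field_simp

theorem sum_inv_node {n : ℕ} (hn : n ≠ 0) : ∑ i ∈ range (n + 1), (node n i)⁻¹ = 0 := by
  have h := sum_range_reflect (fun i => (node n i)⁻¹) (n + 1)
  rw [sum_congr rfl fun i hi => by
      rw [Nat.add_sub_cancel, node_sub_eq_neg hn (by simp at hi; omega), inv_neg],
    sum_neg_distrib] at h
  linarith

theorem node_pos {n i : ℕ} (hi : 2 * i < n) : 0 < node n i := by
  have hn : (0 : ℝ) < n := by exact_mod_cast (show 0 < n by omega)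
  have hi' : (2 * i : ℝ) < n := by exact_mod_cast hi
  refine cos_pos_of_mem_Ioo ⟨by linarith [pi_pos, show 0 ≤ i * π / n by positivity], ?_⟩
  rw [div_lt_iff₀ hn]
  nlinarith [pi_pos]

theorem node_ne_zero {m i : ℕ} (hi : i ≤ 2 * m + 1) : node (2 * m + 1) i ≠ 0 := by
  rcases le_or_gt i m with h | h
  · exact (node_pos (by omega)).ne'
  · rw [← neg_neg (node _ i), ← node_sub_eq_neg (by omega) hi, neg_ne_zero]
    exact (node_pos (by omega)).ne'

theorem negOnePow_mul_prod_node_pos (m : ℕ) :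
    0 < (-1) ^ (m + 1) * ∏ i ∈ range (2 * m + 2), node (2 * m + 1) i := by
  have hsplit : ∏ i ∈ range (2 * m + 2), node (2 * m + 1) i =
      (-1) ^ (m + 1) * (∏ i ∈ range (m + 1), node (2 * m + 1) i) ^ 2 := by
    rw [show 2 * m + 2 = (m + 1) + (m + 1) by ring, prod_range_add]
    have hupper : ∏ k ∈ range (m + 1), node (2 * m + 1) (m + 1 + k) =
        ∏ k ∈ range (m + 1), -node (2 * m + 1) (m + 1 - 1 - k) :=
      prod_congr rfl fun k hk => by
        rw [← node_sub_eq_neg (by omega) (by simp at hk; omega)]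
        congr 1
        simp at hk
        omega
    rw [hupper, prod_neg, prod_range_reflect (node (2 * m + 1)), card_range]
    ring
  rw [hsplit, ← mul_assoc, ← pow_add, ← two_mul, pow_mul, neg_one_sq, one_pow, one_mul]
  exact pow_pos (prod_pos fun i hi => node_pos (by simp at hi; omega)) 2

theorem eval_derivative_T_zero (R : Type*) [CommRing R] (m : ℕ) :
    (derivative (T R (2 * m + 1 : ℕ))).eval 0 = (2 * m + 1) * (-1) ^ m := by
  rw [T_derivative_eq_U, eval_mul, show ((2 * m + 1 : ℕ) : ℤ) - 1 = 2 * m by push_cast; ring,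
    U_eval_two_mul_zero, Int.cast_negOnePow_natCast]
  simp

/-- The weight of the node `x_i` in the formula `P'(0) = ∑ᵢ P(x_i) wᵢ`, valid for
`deg P ≤ 2m + 1`. -/
noncomputable def derivWeight (m i : ℕ) : ℝ :=
  (derivative (Lagrange.basis (range (2 * m + 2)) (node (2 * m + 1)) i)).eval 0

theorem derivWeight_eq {m i : ℕ} (hi : i ≤ 2 * m + 1) :
    derivWeight m i = -(∏ j ∈ range (2 * m + 2), node (2 * m + 1) j) /
      ((∏ j ∈ (range (2 * m + 2)).erase i, (node (2 * m + 1) i - node (2 * m + 1) j)) *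
        node (2 * m + 1) i ^ 2) := by
  set x := node (2 * m + 1)
  set E := (range (2 * m + 2)).erase i
  have hi' : i ∈ range (2 * m + 2) := by simp; omega
  have hx : ∀ j ∈ range (2 * m + 2), x j ≠ 0 :=
    fun j hj => node_ne_zero (by simp at hj; omega)
  have hE : ∀ j ∈ E, (0 : ℝ) ≠ x j := fun j hj => (hx j (mem_of_mem_erase hj)).symm
  have hsum : ∑ j ∈ E, (0 - x j)⁻¹ = (x i)⁻¹ := by
    have := add_sum_erase _ (fun j => (x j)⁻¹) hi'
    rw [sum_inv_node (by omega)] at this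
    simp only [zero_sub, inv_neg, sum_neg_distrib]
    linarith
  have hprod : ∏ j ∈ range (2 * m + 2), x j = x i * ∏ j ∈ E, x j :=
    (mul_prod_erase _ _ hi').symm
  rw [derivWeight, Lagrange.eval_derivative_basis hE, hsum, Lagrange.basis, eval_prod]
  simp only [Lagrange.basisDivisor, eval_mul, eval_C, eval_sub, eval_X, zero_sub]
  rw [prod_mul_distrib, prod_neg, card_erase_of_mem hi', card_range, prod_inv_distrib, hprod,
    show (range (2 * m + 2)).erase i = E from rfl, show 2 * m + 2 - 1 = 2 * m + 1 by omega,
    pow_succ, pow_mul, neg_one_sq, one_pow]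
  field_simp [hx i hi']

theorem negOnePow_mul_derivWeight_pos {m i : ℕ} (hi : i ≤ 2 * m + 1) :
    0 < (-1) ^ i * ((-1) ^ m * derivWeight m i) := by
  have h1 := negOnePow_mul_prod_node_pos m
  have h2 := zero_lt_prod_node_sub_node hi
  have h3 : node (2 * m + 1) i ≠ 0 := node_ne_zero hi
  rw [derivWeight_eq hi]
  generalize ∏ j ∈ range (2 * m + 2), node (2 * m + 1) j = P at h1 ⊢
  generalize ∏ j ∈ (range (2 * m + 1 + 1)).erase i,
    (node (2 * m + 1) i - node (2 * m + 1) j) = D at h2 ⊢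
  generalize node (2 * m + 1) i = x at h3 ⊢
  have hsq : ((-1 : ℝ) ^ i) ^ 2 = 1 := by rw [← pow_mul, mul_comm, pow_mul, neg_one_sq, one_pow]
  have hD : D ≠ 0 := by rintro rfl; simp at h2
  calc (0 : ℝ) < (-1) ^ (m + 1) * P / ((-1) ^ i * D * x ^ 2) := by positivity
    _ = (-1) ^ i * ((-1) ^ m * (-P / (D * x ^ 2))) := by
      field_simp
      linear_combination (-1) ^ m * P * hsq

theorem sumNodes_derivWeight {m : ℕ} {P : ℝ[X]} (hP : P.degree ≤ ↑(2 * m + 1)) :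
    sumNodes (2 * m + 1) (fun i => (-1) ^ m * derivWeight m i) P =
      (-1) ^ m * (derivative P).eval 0 := by
  have hP' : P.degree < #(range (2 * m + 1 + 1)) := by
    grw [hP, card_range]; exact_mod_cast Nat.lt_succ_self _
  rw [sumNodes, Lagrange.eval_derivative_eq_sum_eval_mul (strictAntiOn_node _).injOn hP', mul_sum,
    ← Nat.range_succ_eq_Iic]
  refine sum_congr rfl fun i _ => ?_
  rw [derivWeight]
  ring

theorem abs_eval_derivative_zero_le {m : ℕ} {P : ℝ[X]} (hP : P.degree ≤ ↑(2 * m + 1))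
    (hPbnd : ∀ x ∈ Set.Icc (-1) 1, |P.eval x| ≤ 1) :
    |(derivative P).eval 0| ≤ 2 * m + 1 := by
  have hc : ∀ i ≤ 2 * m + 1, 0 ≤ (-1) ^ i * ((-1) ^ m * derivWeight m i) :=
    fun i hi => (negOnePow_mul_derivWeight_pos hi).le
  have hT : sumNodes (2 * m + 1) (fun i => (-1) ^ m * derivWeight m i) (T ℝ ↑(2 * m + 1)) =
      2 * m + 1 := by
    rw [sumNodes_derivWeight (degree_T ℝ _).le, eval_derivative_T_zero, mul_left_comm,
      ← pow_add, ← two_mul, pow_mul, neg_one_sq, one_pow, mul_one]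
  have hupper := sumNodes_le_sumNodes_T hc hPbnd
  have hlower := sumNodes_le_sumNodes_T hc (P := -P) (by simpa only [eval_neg, abs_neg] using hPbnd)
  rw [hT, sumNodes_derivWeight hP] at hupper
  rw [hT, sumNodes_derivWeight (by rwa [degree_neg]), derivative_neg, eval_neg] at hlower
  have h := abs_le.mpr ⟨by linarith, hupper⟩
  rwa [abs_mul, abs_neg_one_pow, one_mul] at h

end Polynomial.Chebyshev

namespace Polynomial

theorem abs_coeff_one_le_of_natDegree_le {P : ℝ[X]} {d : ℕ} (hP : P.natDegree ≤ d)
    (hPbnd : ∀ x ∈ Set.Icc (-1) 1, |P.eval x| ≤ 1) : |P.coeff 1| ≤ d := by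
  rcases Nat.eq_zero_or_pos d with rfl | hd
  · simp [coeff_eq_zero_of_natDegree_lt (hP.trans_lt one_pos)]
  set m := (d - 1) / 2
  set Q := C (1 / 2 : ℝ) * (P - P.comp (C (-1) * X))
  have hQcoeff (k : ℕ) : Q.coeff k = (1 - (-1) ^ k) / 2 * P.coeff k := by
    simp only [Q, coeff_C_mul, coeff_sub, comp_C_mul_X_coeff]
    ring
  have hQdeg : Q.degree ≤ ↑(2 * m + 1) := by
    refine natDegree_le_iff_degree_le.mp (natDegree_le_iff_coeff_eq_zero.mpr fun k hk => ?_)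
    rw [hQcoeff]
    rcases lt_or_ge d k with h | h
    · rw [coeff_eq_zero_of_natDegree_lt (hP.trans_lt h), mul_zero]
    · rw [(show Even k from ⟨m + 1, by omega⟩).neg_one_pow]
      ring
  have hQbnd : ∀ x ∈ Set.Icc (-1) 1, |Q.eval x| ≤ 1 := by
    intro x hx
    have h₁ := abs_le.mp (hPbnd x hx)
    have h₂ := abs_le.mp (hPbnd (-x) ⟨by linarith [hx.2], by linarith [hx.1]⟩)
    simp only [Q, eval_mul, eval_C, eval_sub, eval_comp, eval_X, neg_one_mul]
    rw [abs_le]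
    constructor <;> linarith
  have h := Chebyshev.abs_eval_derivative_zero_le hQdeg hQbnd
  rw [← coeff_zero_eq_eval_zero, coeff_derivative, hQcoeff] at h
  calc |P.coeff 1| = |(1 - (-1) ^ (0 + 1)) / 2 * P.coeff (0 + 1) * ((0 : ℕ) + 1)| := by norm_num
    _ ≤ 2 * m + 1 := h
    _ ≤ d := by exact_mod_cast (show 2 * m + 1 ≤ d by omega)

end Polynomial

theorem abs_sgn (b : Bool) : |sgn b| = 1 := by
  cases b <;> simp [sgn]

section BooleanCube

variable {n : ℕ}

noncomputable def noisePoly (f : (Fin n → Bool) → ℝ) (z : Fin n → Bool) : ℝ[X] :=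
  ∑ S : Finset (Fin n), C (fcoeff f S * chi S z) * X ^ S.card

theorem coeff_noisePoly (f : (Fin n → Bool) → ℝ) (z : Fin n → Bool) (ℓ : ℕ) :
    (noisePoly f z).coeff ℓ = homPart f ℓ z := by
  simp only [noisePoly, homPart, finsetSum_coeff, coeff_C_mul_X_pow, sum_filter, eq_comm]

theorem natDegree_noisePoly_le {d : ℕ} {f : (Fin n → Bool) → ℝ}
    (hdeg : ∀ S : Finset (Fin n), d < S.card → fcoeff f S = 0) (z : Fin n → Bool) :
    (noisePoly f z).natDegree ≤ d := by
  refine natDegree_sum_le_of_forall_le _ _ fun S _ => ?_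
  rcases le_or_gt S.card d with h | h
  · exact (natDegree_C_mul_X_pow_le _ _).trans h
  · simp [hdeg S h]

theorem prod_one_add_mul_sgn_mul_sgn (t : ℝ) (y z : Fin n → Bool) :
    ∏ i, (1 + t * sgn (y i) * sgn (z i)) =
      ∑ S : Finset (Fin n), t ^ S.card * chi S y * chi S z := by
  rw [prod_one_add, powerset_univ]
  refine sum_congr rfl fun S _ => ?_
  rw [chi, chi, prod_mul_distrib, prod_mul_distrib, prod_const]

theorem eval_noisePoly (f : (Fin n → Bool) → ℝ) (z : Fin n → Bool) (t : ℝ) :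
    (noisePoly f z).eval t = (∑ y, f y * ∏ i, (1 + t * sgn (y i) * sgn (z i))) / 2 ^ n := by
  simp only [noisePoly, eval_finsetSum, eval_mul, eval_C, eval_pow, eval_X, fcoeff,
    prod_one_add_mul_sgn_mul_sgn, mul_sum, sum_div, sum_mul]
  rw [sum_comm]
  refine sum_congr rfl fun S _ => sum_congr rfl fun y _ => ?_
  ring

theorem sum_prod_one_add_mul_sgn_mul_sgn (t : ℝ) (z : Fin n → Bool) :
    ∑ y : Fin n → Bool, ∏ i, (1 + t * sgn (y i) * sgn (z i)) = 2 ^ n := by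
  have hcol (c : Bool) : ∑ b : Bool, (1 + t * sgn b * sgn c) = 2 := by
    cases c <;> simp [sgn] <;> ring
  rw [← Fintype.prod_sum fun i b => 1 + t * sgn b * sgn (z i)]
  simp only [hcol, prod_const, card_univ, Fintype.card_fin]

theorem abs_eval_noisePoly_le_one {f : (Fin n → Bool) → ℝ} (hf : ∀ x, |f x| ≤ 1)
    (z : Fin n → Bool) {t : ℝ} (ht : t ∈ Set.Icc (-1) 1) :
    |(noisePoly f z).eval t| ≤ 1 := by
  have hK (y : Fin n → Bool) : 0 ≤ ∏ i, (1 + t * sgn (y i) * sgn (z i)) :=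
    prod_nonneg fun i _ => by
      have := neg_abs_le (t * sgn (y i) * sgn (z i))
      rw [abs_mul, abs_mul, abs_sgn, abs_sgn, mul_one, mul_one] at this
      linarith [abs_le.mpr ⟨ht.1, ht.2⟩]
  rw [eval_noisePoly, abs_div, abs_of_pos (by positivity : (0 : ℝ) < 2 ^ n),
    div_le_one (by positivity), ← sum_prod_one_add_mul_sgn_mul_sgn t z]
  calc |∑ y, f y * ∏ i, (1 + t * sgn (y i) * sgn (z i))|
      ≤ ∑ y, |f y| * ∏ i, (1 + t * sgn (y i) * sgn (z i)) := by
        grw [abs_sum_le_sum_abs]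
        simp only [abs_mul, abs_of_nonneg (hK _), le_refl]
    _ ≤ ∑ y : Fin n → Bool, ∏ i, (1 + t * sgn (y i) * sgn (z i)) :=
        sum_le_sum fun y _ => mul_le_of_le_one_left (hK y) (hf y)


theorem homPart_one (f : (Fin n → Bool) → ℝ) (x : Fin n → Bool) :
    homPart f 1 x = ∑ i, fcoeff f {i} * sgn (x i) := by
  rw [homPart, ← powerset_univ, ← powersetCard_eq_filter, powersetCard_one, sum_map]
  simp [chi]

theorem sum_abs_fcoeff_singleton_eq_sup' (f : (Fin n → Bool) → ℝ) :
    ∑ i, |fcoeff f {i}| = univ.sup' univ_nonempty fun x => |homPart f 1 x| := by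
  refine le_antisymm (le_sup'_of_le _ (mem_univ fun i => decide (0 ≤ fcoeff f {i})) ?_)
    (sup'_le _ _ fun x _ => ?_)
  · rw [homPart_one]
    refine (le_of_eq (sum_congr rfl fun i _ => ?_)).trans (le_abs_self _)
    by_cases h : 0 ≤ fcoeff f {i}
    · simp [sgn, h, abs_of_nonneg h]
    · simp [sgn, h, abs_of_neg (not_le.mp h)]
  · rw [homPart_one]
    refine (abs_sum_le_sum_abs _ _).trans_eq (sum_congr rfl fun i _ => ?_)
    rw [abs_mul, abs_sgn, mul_one]

theorem abs_homPart_one_le {d : ℕ} {f : (Fin n → Bool) → ℝ} (hf : ∀ x, |f x| ≤ 1)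
    (hdeg : ∀ S : Finset (Fin n), d < S.card → fcoeff f S = 0) (z : Fin n → Bool) :
    |homPart f 1 z| ≤ d := by
  rw [← coeff_noisePoly]
  exact abs_coeff_one_le_of_natDegree_le (natDegree_noisePoly_le hdeg z)
    fun t ht => abs_eval_noisePoly_le_one hf z ht

end BooleanCube

theorem stmt18_general (n d : ℕ) (f : (Fin n → Bool) → ℝ)
    (hbdd : ∀ x, |f x| ≤ 1)
    (hdeg : ∀ S : Finset (Fin n), d < S.card → fcoeff f S = 0) :
    (∑ i : Fin n, |fcoeff f {i}|) ≤ (d : ℝ) ∧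
    (∑ i : Fin n, |fcoeff f {i}|) =
      Finset.univ.sup' Finset.univ_nonempty (fun x : Fin n → Bool => |homPart f 1 x|) := by
  refine ⟨?_, sum_abs_fcoeff_singleton_eq_sup' f⟩
  rw [sum_abs_fcoeff_singleton_eq_sup']
  exact sup'_le _ _ fun z _ => abs_homPart_one_le hbdd hdeg z

/-- If `f : {±1}^n → [-1,1]` has degree `d ≥ 1`, then `Σ_{i=1}^n |f̂({i})| ≤ d`;
equivalently `‖f̂_1‖_1 = ‖f_1‖_∞ ≤ d`. -/
theorem stmt18 (n d : ℕ) (hd : 1 ≤ d) (f : (Fin n → Bool) → ℝ)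
    (hbdd : ∀ x, |f x| ≤ 1)
    (hdeg : ∀ S : Finset (Fin n), d < S.card → fcoeff f S = 0) :
    (∑ i : Fin n, |fcoeff f {i}|) ≤ (d : ℝ) ∧
    (∑ i : Fin n, |fcoeff f {i}|) =
      Finset.univ.sup' Finset.univ_nonempty (fun x : Fin n → Bool => |homPart f 1 x|) :=
  stmt18_general n d f hbdd hdeg
end
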